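/- Fix a real number p > 1 and set λ_{n,k} = (1/n³)(1 + k/n^p) for integers n ≥ 1 and 0 ≤ k ≤ n−1. The family of vectors (H_{n,k})_{n ≥ 1, 0 ≤ k ≤ n−1} is an orthonormal (Hilbert) basis of the real Hilbert space ℓ²(ℕ, ℝ); the family of rank-one operators ( λ_{n,k} (H_{n,k} ⊗ H_{n,k}) )_{n ≥ 1, 0 ≤ k ≤ n−1} is summable in operator norm on ℓ²(ℕ, ℝ) with sum a self-adjoint positive semi-definite bounded operator T satisfying T H_{n,k} = λ_{n,k} H_{n,k} for all n, k, and ∑_{n=1}^∞ ∑_{k=0}^{n−1} λ_{n,k} < ∞. -/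

import Mathlib

open scoped BigOperators ENNReal

/-- The Hartley vector `H_{n,k} ∈ ℓ²(ℕ, ℝ)` supported on the `n`-th block
`{n(n-1)/2, …, n(n-1)/2 + n - 1}`, with
`H_{n,k}(n(n-1)/2 + l) = (1/√n)(cos(2πkl/n) + sin(2πkl/n))`. -/
noncomputable def Hvec (n k : ℕ) : lp (fun _ : ℕ => ℝ) 2 :=
  ∑ l ∈ Finset.range n, lp.single 2 (n * (n - 1) / 2 + l)
    ((1 / Real.sqrt n) *
      (Real.cos (2 * Real.pi * k * l / n) + Real.sin (2 * Real.pi * k * l / n)))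

/-- The eigenvalue `λ_{n,k} = (1/n³)(1 + k/nᵖ)`. -/
noncomputable def lam (p : ℝ) (n k : ℕ) : ℝ := (1 / (n : ℝ) ^ 3) * (1 + (k : ℝ) / (n : ℝ) ^ p)

/-- The rank-one operator `v ⊗ v : f ↦ ⟨f, v⟩ v` on a real Hilbert space. -/
noncomputable def rankOneR {H : Type*} [NormedAddCommGroup H] [InnerProductSpace ℝ H]
    (v : H) : H →L[ℝ] H := (innerSL ℝ v).smulRight v


/-!
Within the `n`-th block, `H_{n,k}` is the `k`-th row of the normalised Hartley matrix
`n^{-1/2} cas(2πkl/n)`, `cas = cos + sin`. Since `cas x · cas y = cos (x - y) + sin (x + y)`,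
orthogonality of its rows comes down to sums of `n`-th roots of unity; being symmetric and
orthogonal, the matrix is its own inverse, so every unit vector of the block is a combination of
the `H_{n,k}`. As the blocks partition `ℕ`, the `H_{n,k}` form a Hilbert basis.

The operator series converges absolutely, since `‖λ • v ⊗ v‖ = λ` for a unit vector `v` and
`λ_{n,k} ≤ 2/n³`. Positivity of the terms passes to the sum by testing against `⟪x, · y⟫`, and
orthonormality kills all terms but one on `H_{n,k}`.
-/

open Finset Real InnerProductSpace ContinuousLinearMap
open scoped lp

theorem sum_range_exp_two_pi_I_mul {n : ℕ} (hn : n ≠ 0) (m : ℤ) :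
    ∑ l ∈ range n, Complex.exp (2 * π * Complex.I * m * l / n)
      = if (n : ℤ) ∣ m then (n : ℂ) else 0 := by
  have hζ := Complex.isPrimitiveRoot_exp n hn
  set ζ := Complex.exp (2 * π * Complex.I / n)
  have hterm : ∀ l : ℕ, Complex.exp (2 * π * Complex.I * m * l / n) = (ζ ^ m) ^ l := by
    intro l
    rw [← Complex.exp_int_mul, ← Complex.exp_nat_mul]
    ring_nf
  simp_rw [hterm]
  split_ifs with hdvd
  · simp [(hζ.zpow_eq_one_iff_dvd m).2 hdvd]
  · have hne : ζ ^ m ≠ 1 := mt (hζ.zpow_eq_one_iff_dvd m).1 hdvd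
    rw [geom_sum_eq hne, ← zpow_natCast, ← zpow_mul, mul_comm, zpow_mul, zpow_natCast,
      hζ.pow_eq_one, one_zpow, sub_self, zero_div]

theorem sum_range_cos_two_pi_mul {n : ℕ} (hn : n ≠ 0) (m : ℤ) :
    ∑ l ∈ range n, cos (2 * π * m * l / n) = if (n : ℤ) ∣ m then (n : ℝ) else 0 := by
  have h := congrArg Complex.re (sum_range_exp_two_pi_I_mul hn m)
  rw [Complex.re_sum] at h
  convert h using 2 with l
  · rw [← Complex.exp_ofReal_mul_I_re]
    push_cast
    ring_nf
  · split_ifs <;> simp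

theorem sum_range_sin_two_pi_mul {n : ℕ} (hn : n ≠ 0) (m : ℤ) :
    ∑ l ∈ range n, sin (2 * π * m * l / n) = 0 := by
  have h := congrArg Complex.im (sum_range_exp_two_pi_I_mul hn m)
  rw [Complex.im_sum] at h
  convert h using 2 with l
  · rw [← Complex.exp_ofReal_mul_I_im]
    push_cast
    ring_nf
  · split_ifs <;> simp

noncomputable def cas (x : ℝ) : ℝ := cos x + sin x

theorem cas_mul_cas (x y : ℝ) : cas x * cas y = cos (x - y) + sin (x + y) := by
  simp only [cas, cos_sub, sin_add]
  ring

theorem sum_range_cas_mul_cas {n : ℕ} (hn : n ≠ 0) (a b : ℤ) :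
    ∑ l ∈ range n, cas (2 * π * a * l / n) * cas (2 * π * b * l / n)
      = if (n : ℤ) ∣ a - b then (n : ℝ) else 0 := by
  have hsub (l : ℕ) :
      2 * π * a * l / n - 2 * π * b * l / n = 2 * π * ((a - b : ℤ) : ℝ) * l / n := by
    push_cast; ring
  have hadd (l : ℕ) :
      2 * π * a * l / n + 2 * π * b * l / n = 2 * π * ((a + b : ℤ) : ℝ) * l / n := by
    push_cast; ring
  simp_rw [cas_mul_cas, hsub, hadd, sum_add_distrib, sum_range_cos_two_pi_mul hn,
    sum_range_sin_two_pi_mul hn, add_zero]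

noncomputable def hartleyCoeff (n k l : ℕ) : ℝ := 1 / √n * cas (2 * π * k * l / n)

theorem hartleyCoeff_comm (n k l : ℕ) : hartleyCoeff n k l = hartleyCoeff n l k := by
  rw [hartleyCoeff, hartleyCoeff, mul_right_comm (2 * π) (k : ℝ)]

theorem sum_hartleyCoeff_mul {n a b : ℕ} (ha : a < n) (hb : b < n) :
    ∑ l ∈ range n, hartleyCoeff n a l * hartleyCoeff n b l = if a = b then 1 else 0 := by
  have hn : n ≠ 0 := by omega
  have hsq : 1 / √n * (1 / √n) = 1 / (n : ℝ) := by
    rw [div_mul_div_comm, one_mul, mul_self_sqrt n.cast_nonneg]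
  have hcas := sum_range_cas_mul_cas hn a b
  push_cast at hcas
  have hdvd : (n : ℤ) ∣ (a : ℤ) - b ↔ a = b :=
    ⟨fun h => ((Nat.modEq_iff_dvd.2 h).eq_of_lt_of_lt hb ha).symm, by rintro rfl; simp⟩
  have hterm : ∀ l : ℕ, hartleyCoeff n a l * hartleyCoeff n b l
      = 1 / n * (cas (2 * π * a * l / n) * cas (2 * π * b * l / n)) := fun l => by
    rw [hartleyCoeff, hartleyCoeff, mul_mul_mul_comm, hsq]
  simp_rw [hterm, ← mul_sum, hcas, hdvd]
  split_ifs <;> simp [hn]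

def blockStart (n : ℕ) : ℕ := n * (n - 1) / 2

theorem blockStart_succ (n : ℕ) : blockStart (n + 1) = blockStart n + n := Nat.triangle_succ n

theorem blockStart_add_lt {n n' l : ℕ} (hl : l < n) (h : n < n') :
    blockStart n + l < blockStart n' :=
  calc blockStart n + l < blockStart (n + 1) := by rw [blockStart_succ]; omega
    _ ≤ blockStart n' := monotone_nat_of_le_succ (fun m => by rw [blockStart_succ]; omega) h

theorem blockStart_add_inj {n n' l l' : ℕ} (hl : l < n) (hl' : l' < n') :
    blockStart n + l = blockStart n' + l' ↔ n = n' ∧ l = l' := by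
  refine ⟨fun h => ?_, by rintro ⟨rfl, rfl⟩; rfl⟩
  rcases lt_trichotomy n n' with hlt | rfl | hgt
  · have := blockStart_add_lt hl hlt; omega
  · omega
  · have := blockStart_add_lt hl' hgt; omega

theorem exists_blockStart_add (j : ℕ) : ∃ n l, l < n ∧ blockStart n + l = j := by
  induction j with
  | zero => exact ⟨1, 0, one_pos, rfl⟩
  | succ j ih =>
    obtain ⟨n, l, hl, rfl⟩ := ih
    rcases Nat.lt_or_ge (l + 1) n with h | h
    · exact ⟨n, l + 1, h, rfl⟩
    · exact ⟨n + 1, 0, n.succ_pos, by rw [blockStart_succ]; omega⟩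

theorem Hvec_eq_sum (n k : ℕ) :
    Hvec n k = ∑ l ∈ range n, lp.single 2 (blockStart n + l) (hartleyCoeff n k l) := rfl

theorem Hvec_apply_blockStart_add (n k : ℕ) {n' l' : ℕ} (hl' : l' < n') :
    Hvec n k (blockStart n' + l') = if n = n' then hartleyCoeff n k l' else 0 := by
  rw [Hvec_eq_sum, lp.coeFn_sum, Finset.sum_apply]
  calc ∑ l ∈ range n, (lp.single 2 (blockStart n + l) (hartleyCoeff n k l) : ℕ → ℝ)
        (blockStart n' + l')
      = ∑ l ∈ range n, if n' = n ∧ l' = l then hartleyCoeff n k l else 0 :=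
        sum_congr rfl fun l hl => by
          simp only [lp.single_apply, Pi.single_apply, blockStart_add_inj hl' (mem_range.1 hl)]
    _ = if n = n' then hartleyCoeff n k l' else 0 := by
        split_ifs with h
        · subst h; simp [hl']
        · simp [Ne.symm h]

theorem inner_Hvec_left (n k : ℕ) (g : ℓ²(ℕ, ℝ)) :
    ⟪Hvec n k, g⟫_ℝ = ∑ l ∈ range n, hartleyCoeff n k l * g (blockStart n + l) := by
  simp [Hvec_eq_sum, sum_inner, lp.inner_single_left, mul_comm]

theorem inner_Hvec_Hvec {n n' k k' : ℕ} (hk : k < n) (hk' : k' < n') :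
    ⟪Hvec n k, Hvec n' k'⟫_ℝ = if n = n' ∧ k = k' then 1 else 0 := by
  rw [inner_Hvec_left, sum_congr rfl fun l hl => by
    rw [Hvec_apply_blockStart_add _ _ (mem_range.1 hl)]]
  by_cases h : n' = n
  · subst h
    simp [sum_hartleyCoeff_mul hk hk']
  · simp [h, Ne.symm h]

theorem single_blockStart_add_eq_sum {n l : ℕ} (hl : l < n) :
    lp.single 2 (blockStart n + l) (1 : ℝ) = ∑ k ∈ range n, hartleyCoeff n l k • Hvec n k := by
  ext j
  obtain ⟨n', l', hl', rfl⟩ := exists_blockStart_add j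
  rw [lp.coeFn_sum, Finset.sum_apply]
  simp only [lp.coeFn_smul, Pi.smul_apply, smul_eq_mul, Hvec_apply_blockStart_add _ _ hl',
    lp.single_apply, Pi.single_apply, blockStart_add_inj hl' hl]
  by_cases h : n = n'
  · subst h
    simp_rw [if_true, hartleyCoeff_comm n _ l', sum_hartleyCoeff_mul hl hl', true_and, eq_comm]
  · simp [h, Ne.symm h]

theorem orthonormal_Hvec : Orthonormal ℝ fun i : Σ n : ℕ, Fin (n + 1) => Hvec (i.1 + 1) i.2 := by
  rw [orthonormal_iff_ite]
  rintro ⟨n, k⟩ ⟨n', k'⟩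
  rw [inner_Hvec_Hvec k.isLt k'.isLt]
  by_cases h : n = n'
  · subst h
    simp [Fin.ext_iff]
  · simp [h]

theorem dense_span_Hvec :
    ⊤ ≤ (Submodule.span ℝ (Set.range fun i : Σ n : ℕ, Fin (n + 1) =>
      Hvec (i.1 + 1) i.2)).topologicalClosure := by
  let e := HilbertBasis.ofRepr (LinearIsometryEquiv.refl ℝ ℓ²(ℕ, ℝ))
  have he (j : ℕ) : e j = lp.single 2 j 1 := (e.repr_symm_single j).symm
  rw [← e.dense_span]
  refine Submodule.topologicalClosure_mono (Submodule.span_le.2 ?_)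
  rintro _ ⟨j, rfl⟩
  obtain ⟨n, l, hl, rfl⟩ := exists_blockStart_add j
  rw [he, single_blockStart_add_eq_sum hl]
  obtain ⟨m, rfl⟩ : ∃ m, n = m + 1 := ⟨n - 1, by omega⟩
  exact Submodule.sum_smul_mem _ _ fun k hk => Submodule.subset_span ⟨⟨m, k, mem_range.1 hk⟩, rfl⟩

theorem lam_nonneg (p : ℝ) (n k : ℕ) : 0 ≤ lam p n k := by
  unfold lam
  positivity

theorem lam_le {p : ℝ} (hp : 1 ≤ p) {n k : ℕ} (hk : k ≤ n) : lam p n k ≤ 2 / (n : ℝ) ^ 3 := by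
  have hkn : (k : ℝ) / (n : ℝ) ^ p ≤ 1 := by
    rcases Nat.eq_zero_or_pos n with rfl | hn
    · simp [Nat.le_zero.1 hk]
    · refine div_le_one_of_le₀ ?_ (by positivity)
      calc (k : ℝ) ≤ n := by exact_mod_cast hk
        _ ≤ (n : ℝ) ^ p := Real.self_le_rpow_of_one_le (by exact_mod_cast hn) hp
  calc lam p n k ≤ 1 / (n : ℝ) ^ 3 * 2 := by unfold lam; gcongr; linarith
    _ = 2 / (n : ℝ) ^ 3 := by ring

theorem summable_lam {p : ℝ} (hp : 1 ≤ p) :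
    Summable fun i : Σ n : ℕ, Fin (n + 1) => lam p (i.1 + 1) i.2 := by
  have hbound : Summable fun n : ℕ => 2 * (1 / ((n + 1 : ℕ) : ℝ) ^ 2) :=
    ((summable_nat_add_iff 1).2 (Real.summable_one_div_nat_pow.2 one_lt_two)).mul_left 2
  rw [summable_sigma_of_nonneg fun i => lam_nonneg p _ _]
  refine ⟨fun _ => .of_finite, .of_nonneg_of_le (fun _ => tsum_nonneg fun _ => lam_nonneg p _ _)
    (fun n => ?_) hbound⟩
  rw [tsum_fintype]
  calc ∑ k : Fin (n + 1), lam p (n + 1) k ≤ ∑ _k : Fin (n + 1), 2 / ((n + 1 : ℕ) : ℝ) ^ 3 :=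
        sum_le_sum fun k _ => lam_le hp k.isLt.le
    _ = 2 * (1 / ((n + 1 : ℕ) : ℝ) ^ 2) := by
        rw [sum_const, card_univ, Fintype.card_fin, nsmul_eq_mul]
        field_simp

section RankOne

variable {ι 𝕜 H : Type*} [RCLike 𝕜] [NormedAddCommGroup H] [InnerProductSpace 𝕜 H]

theorem hasSum_inner_apply {F : ι → H →L[𝕜] H} {T : H →L[𝕜] H} (hT : HasSum F T) (x y : H) :
    HasSum (fun i => ⟪x, F i y⟫_𝕜) ⟪x, T y⟫_𝕜 :=
  (hT.mapL (apply 𝕜 H y)).mapL (innerSL 𝕜 x)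

theorem isPositive_of_hasSum {F : ι → H →L[𝕜] H} {T : H →L[𝕜] H} (hF : ∀ i, (F i).IsPositive)
    (hT : HasSum F T) : T.IsPositive := by
  refine ⟨fun x y => ?_, fun x => ?_⟩
  · have h := (hasSum_inner_apply hT y x).star
    simp only [RCLike.star_def, inner_conj_symm,
      fun i => (hF i).inner_left_eq_inner_right x y] at h
    exact h.unique (hasSum_inner_apply hT x y)
  · have h := (hasSum_inner_apply hT x x).mapL RCLike.reCLM
    simp only [RCLike.reCLM_apply] at h
    rw [reApplyInnerSelf, inner_re_symm]
    exact h.nonneg fun i => (hF i).re_inner_nonneg_right x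

theorem summable_smul_rankOne [CompleteSpace H] {v : ι → H} {c : ι → 𝕜} (hv : ∀ i, ‖v i‖ = 1)
    (hc : Summable fun i => ‖c i‖) : Summable fun i => c i • rankOne 𝕜 (v i) (v i) :=
  .of_norm (hc.congr fun i => by rw [norm_smul, norm_rankOne, hv, mul_one, mul_one])

theorem apply_eq_smul_of_hasSum_smul_rankOne {v : ι → H} {c : ι → 𝕜} {T : H →L[𝕜] H}
    (hv : Orthonormal 𝕜 v) (hT : HasSum (fun i => c i • rankOne 𝕜 (v i) (v i)) T) (j : ι) :
    T (v j) = c j • v j := by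
  classical
  refine (hT.mapL (apply 𝕜 H (v j))).unique ?_
  convert hasSum_ite_eq j (c j • v j) using 2 with i
  rw [apply_apply, smul_apply, rankOne_apply, orthonormal_iff_ite.1 hv i j]
  split_ifs with h
  · rw [h, one_smul]
  · rw [zero_smul, smul_zero]

end RankOne

theorem rankOneR_eq_rankOne {E : Type*} [NormedAddCommGroup E] [InnerProductSpace ℝ E] (v : E) :
    rankOneR v = rankOne ℝ v v := rfl

theorem Hvec_basis_and_operator (p : ℝ) (hp : 1 < p) :
    (∃ b : HilbertBasis (Σ n : ℕ, Fin (n + 1)) ℝ (lp (fun _ : ℕ => ℝ) 2),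
        ∀ i : Σ n : ℕ, Fin (n + 1), b i = Hvec (i.1 + 1) (i.2 : ℕ)) ∧
    Summable (fun i : Σ n : ℕ, Fin (n + 1) => lam p (i.1 + 1) (i.2 : ℕ)) ∧
    Summable (fun i : Σ n : ℕ, Fin (n + 1) =>
      lam p (i.1 + 1) (i.2 : ℕ) • rankOneR (Hvec (i.1 + 1) (i.2 : ℕ))) ∧
    ∀ T : lp (fun _ : ℕ => ℝ) 2 →L[ℝ] lp (fun _ : ℕ => ℝ) 2,
      HasSum (fun i : Σ n : ℕ, Fin (n + 1) =>
          lam p (i.1 + 1) (i.2 : ℕ) • rankOneR (Hvec (i.1 + 1) (i.2 : ℕ))) T →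
        IsSelfAdjoint T ∧
        (∀ f : lp (fun _ : ℕ => ℝ) 2, 0 ≤ (inner ℝ f (T f) : ℝ)) ∧
        ∀ n k : ℕ, 1 ≤ n → k ≤ n - 1 → T (Hvec n k) = lam p n k • Hvec n k := by
  simp only [rankOneR_eq_rankOne]
  refine ⟨⟨.mk orthonormal_Hvec dense_span_Hvec, fun i => by rw [HilbertBasis.coe_mk]⟩,
    summable_lam hp.le,
    summable_smul_rankOne orthonormal_Hvec.1 (summable_norm_iff.2 (summable_lam hp.le)),
    fun T hT => ?_⟩
  have hT_pos : T.IsPositive := isPositive_of_hasSum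
    (fun i => (isPositive_rankOne_self _).smul_of_nonneg (lam_nonneg p _ _)) hT
  refine ⟨hT_pos.isSelfAdjoint, hT_pos.inner_nonneg_right, fun n k hn hk => ?_⟩
  obtain ⟨m, rfl⟩ : ∃ m, n = m + 1 := ⟨n - 1, by omega⟩
  exact apply_eq_smul_of_hasSum_smul_rankOne orthonormal_Hvec hT ⟨m, k, by omega⟩
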